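/- The same infimum as in the interchange lemma is attained when restricting to β ∈ L^∞(Γ_σ): inf over bounded measurable β of ∫_0^1 [β(u) + (1-u)^{-1} E_π[(L-β(u))_+]] dΓ_σ(u) equals Γ_σ({0}) E_π[L] + ∫_{(0,1)} ES_{u,π}(L) dΓ_σ(u). -/

import Mathlib

/-!
For fixed `u ∈ (0, 1)` the objective `b ↦ b + (1 - u)⁻¹ E[(L - b)₊]` decreases up to the lower
quantile `F^←(u)` and increases after it, so its infimum `ES_u(L)` is attained there; for `u = 0`
the infimum `E[L]` is approached as `b → -∞`. Clamping the quantile to `[-n, n]` gives bounded,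
monotone (hence measurable) selections whose objectives converge to `ES_u(L)` and are dominated
by the objective at `b = 0`, so dominated convergence identifies the infimum over bounded `β`
with `∫ ES_u dΓ_σ`.

Integrability of all these objectives comes down to `∫ (1 - u)⁻¹ dΓ_σ < ∞`. By Tonelli this
integral is `1 + ∫₀¹ (1 - v)⁻² Γ_σ(v, 1) dv`, and `(1 - v)⁻² Γ_σ(v, 1)` is the derivative of the
running average `(1 - v)⁻¹ ∫ᵥ¹ σ ≤ sup σ`, off the countably many jumps of `σ`.
-/

open MeasureTheory Filter Set Topology ProbabilityTheory

noncomputable def stopLoss (ν : Measure ℝ) (b : ℝ) : ℝ := ∫ x, max (x - b) 0 ∂ν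

/-- The Rockafellar–Uryasev function, whose infimum over `b` is `ES_u` of the law `ν`. -/
noncomputable def esObjective (ν : Measure ℝ) (u b : ℝ) : ℝ := b + (1 - u)⁻¹ * stopLoss ν b

lemma stopLoss_nonneg (ν : Measure ℝ) (b : ℝ) : 0 ≤ stopLoss ν b :=
  integral_nonneg fun _ => le_max_right _ _

section StopLoss

variable {ν : Measure ℝ}

lemma integrable_posPart_sub_const [IsFiniteMeasure ν] (hν : Integrable (fun x => x) ν) (b : ℝ) :
    Integrable (fun x => max (x - b) 0) ν :=
  (hν.sub (integrable_const b)).pos_part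

lemma antitone_stopLoss [IsFiniteMeasure ν] (hν : Integrable (fun x => x) ν) :
    Antitone (stopLoss ν) := fun b b' h =>
  integral_mono (integrable_posPart_sub_const hν b') (integrable_posPart_sub_const hν b)
    fun x => max_le_max (by linarith) le_rfl

lemma integral_sub_le_stopLoss [IsProbabilityMeasure ν] (hν : Integrable (fun x => x) ν) (b : ℝ) :
    ∫ x, x ∂ν - b ≤ stopLoss ν b := by
  have h : ∫ x, x ∂ν - b = ∫ x, (x - b) ∂ν := by
    rw [integral_sub hν (integrable_const b), integral_const, probReal_univ, one_smul]
  rw [h]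
  exact integral_mono (hν.sub (integrable_const b)) (integrable_posPart_sub_const hν b)
    fun x => le_max_left _ _

lemma stopLoss_sub_stopLoss_le [IsFiniteMeasure ν] (hν : Integrable (fun x => x) ν) (b b' : ℝ) :
    stopLoss ν b - stopLoss ν b' ≤ (b' - b) * ν.real (Ioi b) := by
  have hpt : ∀ x, max (x - b) 0 - max (x - b') 0 ≤ (Ioi b).indicator (fun _ => b' - b) x := by
    intro x
    by_cases hx : b < x
    · rw [indicator_of_mem (mem_Ioi.mpr hx), max_eq_left (by linarith)]
      rcases le_total x b' with h' | h'
      · rw [max_eq_right (by linarith)]; linarith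
      · rw [max_eq_left (by linarith)]; linarith
    · rw [indicator_of_notMem (by simpa using hx), max_eq_right (by linarith [not_lt.mp hx]),
        zero_sub, neg_nonpos]
      exact le_max_right _ _
  calc stopLoss ν b - stopLoss ν b' = ∫ x, (max (x - b) 0 - max (x - b') 0) ∂ν :=
        (integral_sub (integrable_posPart_sub_const hν b) (integrable_posPart_sub_const hν b')).symm
    _ ≤ ∫ x, (Ioi b).indicator (fun _ => b' - b) x ∂ν :=
        integral_mono ((integrable_posPart_sub_const hν b).sub (integrable_posPart_sub_const hν b'))
          ((integrable_const _).indicator measurableSet_Ioi) hpt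
    _ = (b' - b) * ν.real (Ioi b) := by
        rw [integral_indicator_const _ measurableSet_Ioi, smul_eq_mul, mul_comm]

lemma mul_measureReal_le_stopLoss_sub_stopLoss [IsFiniteMeasure ν] (hν : Integrable (fun x => x) ν)
    {b b' : ℝ} (h : b ≤ b') :
    (b' - b) * ν.real (Ici b') ≤ stopLoss ν b - stopLoss ν b' := by
  have hpt : ∀ x, (Ici b').indicator (fun _ => b' - b) x ≤ max (x - b) 0 - max (x - b') 0 := by
    intro x
    by_cases hx : b' ≤ x
    · rw [indicator_of_mem (mem_Ici.mpr hx), max_eq_left (by linarith), max_eq_left (by linarith)]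
      linarith
    · rw [indicator_of_notMem (by simpa using hx),
        max_eq_right (show x - b' ≤ 0 by linarith [not_le.mp hx]), sub_zero]
      exact le_max_right _ _
  calc (b' - b) * ν.real (Ici b') = ∫ x, (Ici b').indicator (fun _ => b' - b) x ∂ν := by
        rw [integral_indicator_const _ measurableSet_Ici, smul_eq_mul, mul_comm]
    _ ≤ ∫ x, (max (x - b) 0 - max (x - b') 0) ∂ν :=
        integral_mono ((integrable_const _).indicator measurableSet_Ici)
          ((integrable_posPart_sub_const hν b).sub (integrable_posPart_sub_const hν b')) hpt
    _ = stopLoss ν b - stopLoss ν b' :=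
        integral_sub (integrable_posPart_sub_const hν b) (integrable_posPart_sub_const hν b')

/-- `b + E[(X - b)₊] = E[X] + E[(b - X)₊]`, and the last term vanishes as `b → -∞`. -/
lemma tendsto_add_stopLoss_atBot [IsProbabilityMeasure ν] (hν : Integrable (fun x => x) ν) :
    Tendsto (fun b => b + stopLoss ν b) atBot (𝓝 (∫ x, x ∂ν)) := by
  have hsplit : ∀ b, b + stopLoss ν b = ∫ x, x ∂ν + ∫ x, max (b - x) 0 ∂ν := by
    intro b
    have hpt : ∀ x, max (x - b) 0 = (x - b) + max (b - x) 0 := fun x => by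
      rcases le_total x b with h | h
      · rw [max_eq_right (by linarith), max_eq_left (by linarith)]; ring
      · rw [max_eq_left (by linarith), max_eq_right (by linarith)]; ring
    have h₁ : Integrable (fun x => x - b) ν := hν.sub (integrable_const b)
    have h₂ : Integrable (fun x => max (b - x) 0) ν := ((integrable_const b).sub hν).pos_part
    rw [stopLoss, integral_congr_ae (Eventually.of_forall hpt), integral_add h₁ h₂,
      integral_sub hν (integrable_const b), integral_const, probReal_univ, one_smul]
    ring
  simp only [hsplit]
  have hlim : Tendsto (fun b => ∫ x, max (b - x) 0 ∂ν) atBot (𝓝 (∫ _, (0 : ℝ) ∂ν)) := by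
    refine tendsto_integral_filter_of_dominated_convergence (fun x => |x|)
      (Eventually.of_forall fun b => ((integrable_const b).sub hν).pos_part.aestronglyMeasurable)
      ?_ hν.abs (Eventually.of_forall fun x => ?_)
    · filter_upwards [eventually_le_atBot 0] with b hb
      refine Eventually.of_forall fun x => ?_
      rw [Real.norm_eq_abs, abs_of_nonneg (le_max_right _ _)]
      exact max_le (by linarith [neg_abs_le x]) (abs_nonneg x)
    · refine tendsto_const_nhds.congr' ?_
      filter_upwards [eventually_le_atBot x] with b hb
      exact (max_eq_right (by linarith)).symm
  simpa using tendsto_const_nhds.add hlim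

end StopLoss

lemma esObjective_zero (ν : Measure ℝ) (b : ℝ) : esObjective ν 0 b = b + stopLoss ν b := by
  rw [esObjective, sub_zero, inv_one, one_mul]

section Objective

variable {ν : Measure ℝ} [IsProbabilityMeasure ν] {u : ℝ}

lemma integral_le_esObjective (hν : Integrable (fun x => x) ν) (hu : u ∈ Ico 0 1) (b : ℝ) :
    ∫ x, x ∂ν ≤ esObjective ν u b := by
  have hinv : 1 ≤ (1 - u)⁻¹ := (one_le_inv₀ (by linarith [hu.2])).mpr (by linarith [hu.1])
  have h₁ := integral_sub_le_stopLoss hν b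
  have h₂ := stopLoss_nonneg ν b
  rw [esObjective]
  nlinarith

lemma esObjective_le_esObjective_of_measureReal_Ioi_le (hν : Integrable (fun x => x) ν)
    (hu : u < 1) {b b' : ℝ} (h : b ≤ b') (hb : ν.real (Ioi b) ≤ 1 - u) :
    esObjective ν u b ≤ esObjective ν u b' := by
  have hdiff := stopLoss_sub_stopLoss_le hν b b'
  have : (1 - u)⁻¹ * (stopLoss ν b - stopLoss ν b') ≤ b' - b := by
    rw [inv_mul_le_iff₀ (by linarith)]
    nlinarith
  rw [esObjective, esObjective]
  linarith [mul_sub (1 - u)⁻¹ (stopLoss ν b) (stopLoss ν b')]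

lemma esObjective_le_esObjective_of_le_measureReal_Ici (hν : Integrable (fun x => x) ν)
    (hu : u < 1) {b b' : ℝ} (h : b ≤ b') (hb' : 1 - u ≤ ν.real (Ici b')) :
    esObjective ν u b' ≤ esObjective ν u b := by
  have hdiff := mul_measureReal_le_stopLoss_sub_stopLoss hν h
  have : b' - b ≤ (1 - u)⁻¹ * (stopLoss ν b - stopLoss ν b') := by
    rw [le_inv_mul_iff₀ (by linarith)]
    nlinarith
  rw [esObjective, esObjective]
  linarith [mul_sub (1 - u)⁻¹ (stopLoss ν b) (stopLoss ν b')]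

lemma bddBelow_range_esObjective (hν : Integrable (fun x => x) ν) (hu : u ∈ Ico 0 1) :
    BddBelow (range (esObjective ν u)) :=
  ⟨_, forall_mem_range.mpr (integral_le_esObjective hν hu)⟩

lemma integral_le_sInf_range_esObjective (hν : Integrable (fun x => x) ν) (hu : u ∈ Ico 0 1) :
    ∫ x, x ∂ν ≤ sInf (range (esObjective ν u)) :=
  le_csInf (range_nonempty _) (forall_mem_range.mpr (integral_le_esObjective hν hu))

lemma sInf_range_esObjective_le (hν : Integrable (fun x => x) ν) (hu : u ∈ Ico 0 1) (b : ℝ) :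
    sInf (range (esObjective ν u)) ≤ esObjective ν u b :=
  csInf_le (bddBelow_range_esObjective hν hu) (mem_range_self b)

lemma sInf_range_esObjective_zero (hν : Integrable (fun x => x) ν) :
    sInf (range (esObjective ν 0)) = ∫ x, x ∂ν := by
  have hlim : Tendsto (esObjective ν 0) atBot (𝓝 (∫ x, x ∂ν)) := by
    rw [show esObjective ν 0 = fun b => b + stopLoss ν b from funext (esObjective_zero ν)]
    exact tendsto_add_stopLoss_atBot hν
  refine (isGLB_of_mem_closure ?_ ?_).csInf_eq (range_nonempty _)
  · exact forall_mem_range.mpr (integral_le_esObjective hν ⟨le_rfl, one_pos⟩)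
  · exact mem_closure_of_tendsto hlim (Eventually.of_forall (mem_range_self ·))

end Objective

/-- The left-continuous inverse `F^←` of the distribution function of `ν`. -/
noncomputable def lowerQuantile (ν : Measure ℝ) (u : ℝ) : ℝ := sInf {x | u ≤ cdf ν x}

section Quantile

variable {ν : Measure ℝ} {u : ℝ}

lemma bddBelow_setOf_le_cdf (hu : 0 < u) : BddBelow {x | u ≤ cdf ν x} := by
  obtain ⟨x₀, hx₀⟩ := eventually_atBot.mp ((tendsto_cdf_atBot (μ := ν)).eventually (gt_mem_nhds hu))
  refine ⟨x₀, fun x hx => le_of_not_gt fun hlt => ?_⟩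
  exact (hx₀ x hlt.le).not_ge hx

lemma nonempty_setOf_le_cdf (hu : u < 1) : {x | u ≤ cdf ν x}.Nonempty :=
  (((tendsto_cdf_atTop (μ := ν)).eventually (lt_mem_nhds hu)).exists).imp fun _ h => h.le

lemma cdf_lt_of_lt_lowerQuantile (hu : 0 < u) {x : ℝ} (hx : x < lowerQuantile ν u) :
    cdf ν x < u :=
  lt_of_not_ge fun h => hx.not_ge (csInf_le (bddBelow_setOf_le_cdf hu) h)

lemma le_cdf_lowerQuantile (hu : u ∈ Ioo 0 1) : u ≤ cdf ν (lowerQuantile ν u) := by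
  have hright : Tendsto (cdf ν) (𝓝[>] lowerQuantile ν u) (𝓝 (cdf ν (lowerQuantile ν u))) :=
    ((cdf ν).right_continuous _).mono Ioi_subset_Ici_self
  refine ge_of_tendsto hright (eventually_nhdsWithin_of_forall fun x hx => ?_)
  obtain ⟨y, hy, hyx⟩ := exists_lt_of_csInf_lt (nonempty_setOf_le_cdf hu.2) hx
  exact hy.trans (monotone_cdf ν hyx.le)

lemma measureReal_Iio_lowerQuantile_le [IsProbabilityMeasure ν] (hu : 0 < u) :
    ν.real (Iio (lowerQuantile ν u)) ≤ u := by
  have hleft : Function.leftLim (cdf ν) (lowerQuantile ν u) ≤ u :=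
    le_of_tendsto ((monotone_cdf ν).tendsto_leftLim _)
      (eventually_nhdsWithin_of_forall fun x hx => (cdf_lt_of_lt_lowerQuantile hu hx).le)
  have hIio := (cdf ν).measure_Iio (tendsto_cdf_atBot ν) (lowerQuantile ν u)
  rw [measure_cdf, sub_zero] at hIio
  rw [measureReal_def, hIio]
  exact ENNReal.toReal_le_of_le_ofReal hu.le (ENNReal.ofReal_le_ofReal hleft)

lemma monotoneOn_lowerQuantile : MonotoneOn (lowerQuantile ν) (Ioo 0 1) :=
  fun _ hu _ hu' huu' => csInf_le_csInf (bddBelow_setOf_le_cdf hu.1)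
    (nonempty_setOf_le_cdf hu'.2) fun _ hx => huu'.trans hx

end Quantile

section Minimizer

variable {ν : Measure ℝ} [IsProbabilityMeasure ν] {u : ℝ}

lemma monotoneOn_esObjective (hν : Integrable (fun x => x) ν) (hu : u ∈ Ioo 0 1) :
    MonotoneOn (esObjective ν u) (Ici (lowerQuantile ν u)) := by
  intro b hb b' _ hbb'
  refine esObjective_le_esObjective_of_measureReal_Ioi_le hν hu.2 hbb' ?_
  calc ν.real (Ioi b) ≤ ν.real (Ioi (lowerQuantile ν u)) := measureReal_mono (Ioi_subset_Ioi hb)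
    _ = 1 - cdf ν (lowerQuantile ν u) := by
        rw [cdf_eq_real, ← compl_Iic, probReal_compl_eq_one_sub measurableSet_Iic]
    _ ≤ 1 - u := by linarith [le_cdf_lowerQuantile (ν := ν) hu]

lemma antitoneOn_esObjective (hν : Integrable (fun x => x) ν) (hu : u ∈ Ioo 0 1) :
    AntitoneOn (esObjective ν u) (Iic (lowerQuantile ν u)) := by
  intro b _ b' hb' hbb'
  refine esObjective_le_esObjective_of_le_measureReal_Ici hν hu.2 hbb' ?_
  calc 1 - u ≤ 1 - ν.real (Iio (lowerQuantile ν u)) := by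
        linarith [measureReal_Iio_lowerQuantile_le (ν := ν) hu.1]
    _ = ν.real (Ici (lowerQuantile ν u)) := by
        rw [← compl_Iio, probReal_compl_eq_one_sub measurableSet_Iio]
    _ ≤ ν.real (Ici b') := measureReal_mono (Ici_subset_Ici.mpr hb')

lemma sInf_range_esObjective (hν : Integrable (fun x => x) ν) (hu : u ∈ Ioo 0 1) :
    sInf (range (esObjective ν u)) = esObjective ν u (lowerQuantile ν u) := by
  refine IsLeast.csInf_eq ⟨mem_range_self _, forall_mem_range.mpr fun b => ?_⟩
  rcases le_total b (lowerQuantile ν u) with h | h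
  · exact antitoneOn_esObjective hν hu h (mem_Iic.mpr le_rfl) h
  · exact monotoneOn_esObjective hν hu (mem_Ici.mpr le_rfl) h h

end Minimizer

/-- Extended monotonically outside `(0, 1)`, so that it is measurable. -/
noncomputable def truncQuantile (ν : Measure ℝ) (n : ℕ) (u : ℝ) : ℝ :=
  if u ≤ 0 then -n else if 1 ≤ u then n else max (-n) (min n (lowerQuantile ν u))

section TruncQuantile

variable {ν : Measure ℝ} (n : ℕ)

lemma monotone_truncQuantile : Monotone (truncQuantile ν n) := by
  intro x y hxy
  have hn : (0 : ℝ) ≤ n := n.cast_nonneg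
  simp only [truncQuantile]
  split_ifs with hx₀ hy₀ hy₁ hx₁ hy₀' hy₁' hy₀'' hy₁''
  all_goals first
    | linarith
    | exact le_max_left _ _
    | exact max_le (by linarith) (min_le_left _ _)
    | exact max_le_max le_rfl (min_le_min le_rfl (monotoneOn_lowerQuantile
        ⟨not_le.mp hx₀, not_le.mp hx₁⟩ ⟨not_le.mp hy₀'', not_le.mp hy₁''⟩ hxy))

lemma abs_truncQuantile_le (u : ℝ) : |truncQuantile ν n u| ≤ n := by
  have hn : (0 : ℝ) ≤ n := n.cast_nonneg
  simp only [truncQuantile]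
  split_ifs
  · rw [abs_neg, abs_of_nonneg hn]
  · rw [abs_of_nonneg hn]
  · exact abs_le.mpr ⟨le_max_left _ _, max_le (by linarith) (min_le_left _ _)⟩

lemma truncQuantile_zero : truncQuantile ν n 0 = -n := if_pos le_rfl

lemma truncQuantile_mem_uIcc {u : ℝ} (hu : u ∈ Ioo 0 1) :
    truncQuantile ν n u ∈ uIcc (lowerQuantile ν u) 0 := by
  have hn : (0 : ℝ) ≤ n := n.cast_nonneg
  rw [truncQuantile, if_neg (not_le.mpr hu.1), if_neg (not_le.mpr hu.2), mem_uIcc]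
  rcases le_total (lowerQuantile ν u) 0 with h | h
  · exact Or.inl ⟨le_max_of_le_right (le_min (by linarith) le_rfl),
      max_le (by linarith) (min_le_right _ _ |>.trans h)⟩
  · exact Or.inr ⟨le_max_of_le_right (le_min hn h), max_le (by linarith) (min_le_right _ _)⟩

lemma eventually_truncQuantile_eq {u : ℝ} (hu : u ∈ Ioo 0 1) :
    ∀ᶠ n : ℕ in atTop, truncQuantile ν n u = lowerQuantile ν u := by
  obtain ⟨N, hN⟩ := exists_nat_ge |lowerQuantile ν u|
  filter_upwards [eventually_ge_atTop N] with n hn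
  have hq := abs_le.mp (hN.trans (Nat.cast_le.mpr hn))
  rw [truncQuantile, if_neg (not_le.mpr hu.1), if_neg (not_le.mpr hu.2),
    min_eq_right hq.2, max_eq_right hq.1]

end TruncQuantile

lemma abs_le_abs_add_abs_of_le_of_le {a b c : ℝ} (hab : a ≤ b) (hbc : b ≤ c) :
    |b| ≤ |a| + |c| :=
  (abs_le_max_abs_abs hab hbc).trans (max_le_add_of_nonneg (abs_nonneg _) (abs_nonneg _))

section Interchange

variable {ν : Measure ℝ} [IsProbabilityMeasure ν] {u : ℝ}

lemma tendsto_esObjective_truncQuantile (hν : Integrable (fun x => x) ν) (hu : u ∈ Ico 0 1) :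
    Tendsto (fun n : ℕ => esObjective ν u (truncQuantile ν n u)) atTop
      (𝓝 (sInf (range (esObjective ν u)))) := by
  rcases hu.1.eq_or_lt with rfl | hu₀
  · rw [sInf_range_esObjective_zero hν]
    simp only [truncQuantile_zero, esObjective_zero]
    exact (tendsto_add_stopLoss_atBot hν).comp
      (tendsto_neg_atTop_atBot.comp tendsto_natCast_atTop_atTop)
  · rw [sInf_range_esObjective hν ⟨hu₀, hu.2⟩]
    refine tendsto_const_nhds.congr' ?_
    filter_upwards [eventually_truncQuantile_eq ⟨hu₀, hu.2⟩] with n hn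
    rw [hn]

lemma esObjective_truncQuantile_le (hν : Integrable (fun x => x) ν) (hu : u ∈ Ico 0 1) (n : ℕ) :
    esObjective ν u (truncQuantile ν n u) ≤ esObjective ν u 0 := by
  rcases hu.1.eq_or_lt with rfl | hu₀
  · rw [truncQuantile_zero]
    exact esObjective_le_esObjective_of_measureReal_Ioi_le hν one_pos
      (neg_nonpos.mpr n.cast_nonneg) (by simp)
  · have hu' : u ∈ Ioo 0 1 := ⟨hu₀, hu.2⟩
    rcases le_total (lowerQuantile ν u) 0 with h | h
    · obtain ⟨h₁, h₂⟩ := (uIcc_of_le h ▸ truncQuantile_mem_uIcc n hu' :)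
      exact monotoneOn_esObjective hν hu' h₁ h h₂
    · obtain ⟨h₁, h₂⟩ := (uIcc_of_ge h ▸ truncQuantile_mem_uIcc n hu' :)
      exact antitoneOn_esObjective hν hu' h h₂ h₁

variable {Γ : Measure ℝ} [IsFiniteMeasure Γ]

lemma integrable_esObjective_comp (hν : Integrable (fun x => x) ν)
    (hΓ : Integrable (fun u => (1 - u)⁻¹) Γ) {β : ℝ → ℝ} (hβ : Measurable β) {M : ℝ}
    (hM : ∀ u, |β u| ≤ M) :
    Integrable (fun u => esObjective ν u (β u)) Γ := by
  have hmeas : Measurable fun u => esObjective ν u (β u) :=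
    hβ.add ((measurable_const.sub measurable_id).inv.mul
      ((antitone_stopLoss hν).measurable.comp hβ))
  refine Integrable.mono' (g := fun u => M + ‖(1 - u)⁻¹‖ * stopLoss ν (-M))
    ((integrable_const M).add (hΓ.norm.mul_const _)) hmeas.aestronglyMeasurable
    (Eventually.of_forall fun u => ?_)
  have hstop : stopLoss ν (β u) ≤ stopLoss ν (-M) :=
    antitone_stopLoss hν (neg_le_of_abs_le (hM u))
  calc ‖esObjective ν u (β u)‖ ≤ |β u| + |(1 - u)⁻¹| * stopLoss ν (β u) := by
        rw [Real.norm_eq_abs, esObjective]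
        refine (abs_add_le _ _).trans_eq ?_
        rw [abs_mul, abs_of_nonneg (stopLoss_nonneg ν _)]
    _ ≤ M + ‖(1 - u)⁻¹‖ * stopLoss ν (-M) := by
        rw [Real.norm_eq_abs]
        exact add_le_add (hM u) (mul_le_mul_of_nonneg_left hstop (abs_nonneg _))

lemma integrable_abs_integral_add_abs_esObjective_zero (hν : Integrable (fun x => x) ν)
    (hΓ : Integrable (fun u => (1 - u)⁻¹) Γ) :
    Integrable (fun u => |∫ x, x ∂ν| + |esObjective ν u 0|) Γ :=
  (integrable_const _).add
    (integrable_esObjective_comp hν hΓ measurable_const (M := 0) (by simp)).abs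

lemma integrable_sInf_range_esObjective (hν : Integrable (fun x => x) ν)
    (hΓ_supp : ∀ᵐ u ∂Γ, u ∈ Ico 0 1) (hΓ : Integrable (fun u => (1 - u)⁻¹) Γ) :
    Integrable (fun u => sInf (range (esObjective ν u))) Γ := by
  refine (integrable_abs_integral_add_abs_esObjective_zero hν hΓ).mono' ?_ ?_
  · exact aestronglyMeasurable_of_tendsto_ae atTop
      (fun n => (integrable_esObjective_comp hν hΓ (monotone_truncQuantile n).measurable
        (abs_truncQuantile_le n)).aestronglyMeasurable)
      (hΓ_supp.mono fun u hu => tendsto_esObjective_truncQuantile hν hu)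
  · filter_upwards [hΓ_supp] with u hu
    exact abs_le_abs_add_abs_of_le_of_le
      (integral_le_sInf_range_esObjective hν hu) (sInf_range_esObjective_le hν hu 0)

theorem sInf_integral_esObjective (hν : Integrable (fun x => x) ν)
    (hΓ_supp : ∀ᵐ u ∂Γ, u ∈ Ico 0 1) (hΓ : Integrable (fun u => (1 - u)⁻¹) Γ) :
    sInf {r : ℝ | ∃ β : ℝ → ℝ, Measurable β ∧ (∃ M : ℝ, ∀ u, |β u| ≤ M) ∧
        r = ∫ u, esObjective ν u (β u) ∂Γ} = ∫ u, sInf (range (esObjective ν u)) ∂Γ := by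
  have htrunc : ∀ n : ℕ, Integrable (fun u => esObjective ν u (truncQuantile ν n u)) Γ :=
    fun n => integrable_esObjective_comp hν hΓ (monotone_truncQuantile n).measurable
      (abs_truncQuantile_le n)
  have hlower : ∫ u, sInf (range (esObjective ν u)) ∂Γ ∈ lowerBounds {r : ℝ | ∃ β : ℝ → ℝ,
      Measurable β ∧ (∃ M : ℝ, ∀ u, |β u| ≤ M) ∧ r = ∫ u, esObjective ν u (β u) ∂Γ} := by
    rintro r ⟨β, hβ, ⟨M, hM⟩, rfl⟩
    refine integral_mono_ae (integrable_sInf_range_esObjective hν hΓ_supp hΓ)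
      (integrable_esObjective_comp hν hΓ hβ hM) ?_
    filter_upwards [hΓ_supp] with u hu
    exact sInf_range_esObjective_le hν hu (β u)
  have hlim : Tendsto (fun n : ℕ => ∫ u, esObjective ν u (truncQuantile ν n u) ∂Γ) atTop
      (𝓝 (∫ u, sInf (range (esObjective ν u)) ∂Γ)) := by
    refine tendsto_integral_of_dominated_convergence
      (fun u => |∫ x, x ∂ν| + |esObjective ν u 0|) (fun n => (htrunc n).aestronglyMeasurable)
      (integrable_abs_integral_add_abs_esObjective_zero hν hΓ) (fun n => ?_)
      (hΓ_supp.mono fun u hu => tendsto_esObjective_truncQuantile hν hu)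
    filter_upwards [hΓ_supp] with u hu
    exact abs_le_abs_add_abs_of_le_of_le (integral_le_esObjective hν hu _)
      (esObjective_truncQuantile_le hν hu n)
  refine (isGLB_of_mem_closure hlower (mem_closure_of_tendsto hlim ?_)).csInf_eq
    ⟨_, fun _ => 0, measurable_const, ⟨0, by simp⟩, rfl⟩
  exact Eventually.of_forall fun n =>
    ⟨truncQuantile ν n, (monotone_truncQuantile n).measurable, ⟨n, abs_truncQuantile_le n⟩, rfl⟩

end Interchange

section InvOneSub

lemma lintegral_inv_sq_one_sub {a : ℝ} (ha : a ∈ Ico 0 1) :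
    ∫⁻ v in Ico 0 a, ENNReal.ofReal ((1 - v) ^ 2)⁻¹ = ENNReal.ofReal ((1 - a)⁻¹ - 1) := by
  have hlt : ∀ x ∈ uIcc 0 a, x < 1 := fun x hx => by
    rw [uIcc_of_le ha.1] at hx; exact hx.2.trans_lt ha.2
  have hderiv : ∀ x ∈ uIcc 0 a, HasDerivAt (fun v => (1 - v)⁻¹) ((1 - x) ^ 2)⁻¹ x := by
    intro x hx
    rw [show ((1 - x) ^ 2)⁻¹ = -(-1) / (1 - x) ^ 2 by ring]
    exact ((hasDerivAt_id' x).const_sub 1).inv (sub_ne_zero.mpr (hlt x hx).ne')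
  have hcont : ContinuousOn (fun v : ℝ => ((1 - v) ^ 2)⁻¹) (uIcc 0 a) :=
    (continuousOn_const.sub continuousOn_id).pow 2 |>.inv₀ fun x hx =>
      pow_ne_zero 2 (sub_ne_zero.mpr (hlt x hx).ne')
  have hint := hcont.intervalIntegrable (μ := volume)
  have hftc := intervalIntegral.integral_eq_sub_of_hasDerivAt hderiv hint
  rw [intervalIntegral.integral_of_le ha.1, sub_zero, inv_one] at hftc
  rw [Measure.restrict_congr_set Ico_ae_eq_Ioc, ← hftc,
    ofReal_integral_eq_lintegral_ofReal
      ((intervalIntegrable_iff_integrableOn_Ioc_of_le ha.1).mp hint)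
      (Eventually.of_forall fun _ => by positivity)]

/-- Tonelli's theorem applied to `(1 - u)⁻¹ = 1 + ∫₀ᵘ (1 - v)⁻² dv`. -/
lemma lintegral_inv_one_sub_eq (Γ : Measure ℝ) [SFinite Γ] :
    ∫⁻ u in Ico 0 1, ENNReal.ofReal (1 - u)⁻¹ ∂Γ =
      Γ (Ico 0 1) + ∫⁻ v in Ico 0 1, ENNReal.ofReal ((1 - v) ^ 2)⁻¹ * Γ (Ioo v 1) := by
  set k : ℝ → ENNReal := fun v => ENNReal.ofReal ((1 - v) ^ 2)⁻¹
  have hk : Measurable k := by fun_prop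
  have hsplit : ∀ u ∈ Ico (0 : ℝ) 1,
      ENNReal.ofReal (1 - u)⁻¹ = 1 + ∫⁻ v, (Ico 0 u).indicator k v := by
    intro u hu
    have h1 : 1 ≤ (1 - u)⁻¹ := (one_le_inv₀ (by linarith [hu.2])).mpr (by linarith [hu.1])
    rw [lintegral_indicator measurableSet_Ico, lintegral_inv_sq_one_sub hu, ← ENNReal.ofReal_one,
      ← ENNReal.ofReal_add zero_le_one (by linarith), add_sub_cancel]
  have hmeas : Measurable (Function.uncurry fun u v => (Ico (0 : ℝ) u).indicator k v) := by
    have heq : (Function.uncurry fun u v => (Ico (0 : ℝ) u).indicator k v) =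
        {p : ℝ × ℝ | 0 ≤ p.2 ∧ p.2 < p.1}.indicator (fun p => k p.2) := by
      ext ⟨u, v⟩; simp [indicator_apply]
    rw [heq]
    exact (hk.comp measurable_snd).indicator
      ((measurableSet_le measurable_const measurable_snd).inter
        (measurableSet_lt measurable_snd measurable_fst))
  have hinner : ∀ v, ∫⁻ u in Ico 0 1, (Ico 0 u).indicator k v ∂Γ =
      (Ico 0 1).indicator (fun v => k v * Γ (Ioo v 1)) v := by
    intro v
    by_cases hv : 0 ≤ v
    · have hind : ∀ u, (Ico 0 u).indicator k v = (Ioi v).indicator (fun _ => k v) u := by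
        intro u; simp [indicator_apply, hv]
      have hset : Ioi v ∩ Ico 0 1 = Ioo v 1 := by
        ext x; simp only [mem_inter_iff, mem_Ioi, mem_Ico, mem_Ioo]
        exact ⟨fun h => ⟨h.1, h.2.2⟩, fun h => ⟨h.1, hv.trans h.1.le, h.2⟩⟩
      simp_rw [hind]
      rw [lintegral_indicator_const measurableSet_Ioi, Measure.restrict_apply measurableSet_Ioi,
        hset, indicator_apply]
      split_ifs with hv₁
      · rfl
      · rw [Ioo_eq_empty (fun h => hv₁ ⟨hv, h⟩), measure_empty, mul_zero]
    · simp [hv]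
  calc ∫⁻ u in Ico 0 1, ENNReal.ofReal (1 - u)⁻¹ ∂Γ
      = ∫⁻ u in Ico 0 1, (1 + ∫⁻ v, (Ico 0 u).indicator k v) ∂Γ :=
        setLIntegral_congr_fun measurableSet_Ico hsplit
    _ = Γ (Ico 0 1) + ∫⁻ v, ∫⁻ u in Ico 0 1, (Ico 0 u).indicator k v ∂Γ := by
        rw [lintegral_add_left measurable_const, setLIntegral_const, one_mul,
          lintegral_lintegral_swap hmeas.aemeasurable]
    _ = Γ (Ico 0 1) + ∫⁻ v in Ico 0 1, k v * Γ (Ioo v 1) := by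
        simp_rw [hinner]
        rw [lintegral_indicator measurableSet_Ico]

end InvOneSub

section SpectralFunction

variable {σ : ℝ → ℝ}

lemma continuousOn_integral_to_one (hσ_int : IntervalIntegrable σ volume 0 1) :
    ContinuousOn (fun v => ∫ w in v..1, σ w) (Icc 0 1) := by
  have h := intervalIntegral.continuousOn_primitive_interval_left (μ := volume) (b := 1) (a := 0)
    (f := σ) (by rw [uIcc_of_le zero_le_one]
                 exact (intervalIntegrable_iff_integrableOn_Icc_of_le zero_le_one).mp hσ_int)
  rwa [uIcc_of_le zero_le_one] at h

lemma intervalIntegrable_inv_sq_mul_integral_sub (hσ_int : IntervalIntegrable σ volume 0 1)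
    {b : ℝ} (hb : b ∈ Ico 0 1) :
    IntervalIntegrable (fun v => ((1 - v) ^ 2)⁻¹ * ((∫ w in v..1, σ w) - (1 - v) * σ v))
      volume 0 b := by
  have hsub : Icc 0 b ⊆ Icc 0 1 := Icc_subset_Icc le_rfl hb.2.le
  have hne : ∀ x ∈ uIcc 0 b, (1 - x) ^ 2 ≠ 0 := fun x hx => by
    rw [uIcc_of_le hb.1] at hx; exact pow_ne_zero 2 (by linarith [hx.2, hb.2])
  have hσb : IntervalIntegrable σ volume 0 b :=
    hσ_int.mono_set (by rw [uIcc_of_le hb.1, uIcc_of_le zero_le_one]; exact hsub)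
  refine IntervalIntegrable.continuousOn_mul ?_
    (((continuousOn_const.sub continuousOn_id).pow 2).inv₀ hne)
  refine IntervalIntegrable.sub ?_ (hσb.continuousOn_mul (by fun_prop))
  exact ContinuousOn.intervalIntegrable
    ((continuousOn_integral_to_one hσ_int).mono (by rw [uIcc_of_le hb.1]; exact hsub))

/-- The derivative of the average `(1 - v)⁻¹ ∫ᵥ¹ σ` is `(1 - v)⁻² (∫ᵥ¹ σ - (1 - v) σ v)` at
every continuity point of `σ`, hence off a countable set when `σ` is monotone. -/
lemma integral_inv_sq_mul_integral_sub (hσ_int : IntervalIntegrable σ volume 0 1)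
    (hσ_mono : MonotoneOn σ (Ico 0 1)) {b : ℝ} (hb : b ∈ Ico 0 1) :
    ∫ v in 0..b, ((1 - v) ^ 2)⁻¹ * ((∫ w in v..1, σ w) - (1 - v) * σ v) =
      (1 - b)⁻¹ * (∫ w in b..1, σ w) - ∫ w in 0..1, σ w := by
  have hne : ∀ x ∈ Icc 0 b, 1 - x ≠ 0 := fun x hx => by linarith [hx.2, hb.2]
  have hcont : ContinuousOn (fun v => (1 - v)⁻¹ * ∫ w in v..1, σ w) (Icc 0 b) :=
    ((continuousOn_const.sub continuousOn_id).inv₀ hne).mul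
      ((continuousOn_integral_to_one hσ_int).mono (Icc_subset_Icc le_rfl hb.2.le))
  have hderiv : ∀ x ∈ Ioo 0 b \ {x | x ∈ Ico 0 1 ∧ ¬ContinuousWithinAt σ (Ico 0 1) x},
      HasDerivAt (fun v => (1 - v)⁻¹ * ∫ w in v..1, σ w)
        (((1 - x) ^ 2)⁻¹ * ((∫ w in x..1, σ w) - (1 - x) * σ x)) x := by
    rintro x ⟨hx, hxc⟩
    have hx₁ : x ∈ Ioo 0 1 := ⟨hx.1, hx.2.trans hb.2⟩
    have hx₀ : 1 - x ≠ 0 := by linarith [hx₁.2]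
    have hσx : ContinuousAt σ x :=
      (not_and_not_right.mp hxc ⟨hx₁.1.le, hx₁.2⟩).continuousAt (Ico_mem_nhds hx₁.1 hx₁.2)
    have hmeas : StronglyMeasurableAtFilter σ (𝓝 x) :=
      ⟨Ioo 0 1, Ioo_mem_nhds hx₁.1 hx₁.2,
        (hσ_int.1.mono_set Ioo_subset_Ioc_self).aestronglyMeasurable⟩
    have hint : HasDerivAt (fun v => ∫ w in v..1, σ w) (-σ x) x :=
      intervalIntegral.integral_hasDerivAt_left
        (hσ_int.mono_set (by
          rw [uIcc_of_le hx₁.2.le, uIcc_of_le zero_le_one]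
          exact Icc_subset_Icc hx₁.1.le le_rfl)) hmeas hσx
    have hinv : HasDerivAt (fun v => (1 - v)⁻¹) (-(-1) / (1 - x) ^ 2) x :=
      ((hasDerivAt_id' x).const_sub 1).inv hx₀
    have heq : ((1 - x) ^ 2)⁻¹ * ((∫ w in x..1, σ w) - (1 - x) * σ x) =
        -(-1) / (1 - x) ^ 2 * (∫ w in x..1, σ w) + (1 - x)⁻¹ * -σ x := by
      field_simp
      ring
    rw [heq]
    exact hinv.mul hint
  rw [integral_eq_of_hasDerivAt_off_countable_of_le _ _ hb.1
    hσ_mono.countable_not_continuousWithinAt hcont hderiv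
    (intervalIntegrable_inv_sq_mul_integral_sub hσ_int hb), sub_zero, inv_one, one_mul]

end SpectralFunction

section SpectralMeasure

variable {σ : ℝ → ℝ} {Γ : Measure ℝ} [IsProbabilityMeasure Γ]

lemma measureReal_Ioo_one_eq (hσ_int : IntervalIntegrable σ volume 0 1)
    (hσ_nonneg : ∀ u ∈ Ico (0:ℝ) 1, 0 ≤ σ u) (hσ_one : ∫ u in (0:ℝ)..1, σ u = 1)
    (hΓ_supp : Γ (Ico (0:ℝ) 1)ᶜ = 0)
    (hΓ_cdf : ∀ u ∈ Ico (0:ℝ) 1,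
      Γ (Icc 0 u) = ENNReal.ofReal ((1 - u) * σ u + ∫ v in (0:ℝ)..u, σ v))
    {v : ℝ} (hv : v ∈ Ico 0 1) :
    Γ.real (Ioo v 1) = (∫ w in v..1, σ w) - (1 - v) * σ v := by
  have hIco : Γ.real (Ico 0 1) = 1 := by
    rw [measureReal_def, (prob_compl_eq_zero_iff measurableSet_Ico).mp hΓ_supp, ENNReal.toReal_one]
  have hunion : Γ.real (Icc 0 v) + Γ.real (Ioo v 1) = Γ.real (Ico 0 1) := by
    rw [← measureReal_union (disjoint_left.mpr fun x hx hx' => hx'.1.not_ge hx.2) measurableSet_Ioo,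
      Icc_union_Ioo_eq_Ico hv.1 hv.2]
  have hF : Γ.real (Icc 0 v) = (1 - v) * σ v + ∫ w in (0:ℝ)..v, σ w := by
    rw [measureReal_def, hΓ_cdf v hv, ENNReal.toReal_ofReal]
    exact add_nonneg (mul_nonneg (by linarith [hv.2]) (hσ_nonneg v hv))
      (intervalIntegral.integral_nonneg hv.1 fun w hw => hσ_nonneg w ⟨hw.1, hw.2.trans_lt hv.2⟩)
  have hsplit : (∫ w in (0:ℝ)..v, σ w) + ∫ w in v..1, σ w = 1 := by
    rw [intervalIntegral.integral_add_adjacent_intervals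
      (hσ_int.mono_set (by rw [uIcc_of_le hv.1, uIcc_of_le zero_le_one]
                           exact Icc_subset_Icc le_rfl hv.2.le))
      (hσ_int.mono_set (by rw [uIcc_of_le hv.2.le, uIcc_of_le zero_le_one]
                           exact Icc_subset_Icc hv.1 le_rfl)), hσ_one]
  linarith

lemma integrableOn_inv_sq_mul_measureReal_Ioo (hσ_int : IntervalIntegrable σ volume 0 1)
    (hσ_nonneg : ∀ u ∈ Ico (0:ℝ) 1, 0 ≤ σ u) (hσ_mono : MonotoneOn σ (Ico (0:ℝ) 1))
    {M : ℝ} (hM : ∀ u ∈ Ico (0:ℝ) 1, σ u ≤ M) (hσ_one : ∫ u in (0:ℝ)..1, σ u = 1)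
    (hΓ_supp : Γ (Ico (0:ℝ) 1)ᶜ = 0)
    (hΓ_cdf : ∀ u ∈ Ico (0:ℝ) 1,
      Γ (Icc 0 u) = ENNReal.ofReal ((1 - u) * σ u + ∫ v in (0:ℝ)..u, σ v)) :
    IntegrableOn (fun v => ((1 - v) ^ 2)⁻¹ * Γ.real (Ioo v 1)) (Ioc 0 1) := by
  set b : ℕ → ℝ := fun n => 1 - 1 / (n + 1)
  have hb : ∀ n, b n ∈ Ico 0 1 := fun n => by
    have h₁ : 0 < 1 / ((n : ℝ) + 1) := by positivity
    have h₂ : 1 / ((n : ℝ) + 1) ≤ 1 :=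
      (div_le_one (by positivity)).mpr (by linarith [n.cast_nonneg (α := ℝ)])
    exact ⟨by linarith, by linarith⟩
  have hEq : ∀ n, EqOn (fun v => ((1 - v) ^ 2)⁻¹ * ((∫ w in v..1, σ w) - (1 - v) * σ v))
      (fun v => ((1 - v) ^ 2)⁻¹ * Γ.real (Ioo v 1)) (Ioc 0 (b n)) := fun n v hv => by
    dsimp only
    rw [measureReal_Ioo_one_eq hσ_int hσ_nonneg hσ_one hΓ_supp hΓ_cdf
      ⟨hv.1.le, hv.2.trans_lt (hb n).2⟩]
  have hint : ∀ n, IntegrableOn (fun v => ((1 - v) ^ 2)⁻¹ * Γ.real (Ioo v 1)) (Ioc 0 (b n)) :=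
    fun n => ((intervalIntegrable_inv_sq_mul_integral_sub hσ_int (hb n)).1).congr_fun (hEq n)
      measurableSet_Ioc
  refine integrableOn_Ioc_of_intervalIntegral_norm_bounded_right (l := atTop) (I := M) hint ?_
    (Eventually.of_forall fun n => ?_)
  · simpa [b] using (tendsto_const_nhds (x := (1 : ℝ))).sub
      (tendsto_one_div_add_atTop_nhds_zero_nat (𝕜 := ℝ))
  have hσb : ∫ w in b n..1, σ w ≤ (1 - b n) * M := by
    have h := intervalIntegral.integral_mono_ae_restrict (hb n).2.le
      (hσ_int.mono_set (by rw [uIcc_of_le (hb n).2.le, uIcc_of_le zero_le_one]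
                           exact Icc_subset_Icc (hb n).1 le_rfl))
      intervalIntegrable_const (g := fun _ => M) (by
        rw [← Measure.restrict_congr_set Ico_ae_eq_Icc]
        filter_upwards [ae_restrict_mem measurableSet_Ico] with w hw
        exact hM w ⟨(hb n).1.trans hw.1, hw.2⟩)
    simpa using h
  calc ∫ v in Ioc 0 (b n), ‖((1 - v) ^ 2)⁻¹ * Γ.real (Ioo v 1)‖
      = ∫ v in (0:ℝ)..b n, ((1 - v) ^ 2)⁻¹ * ((∫ w in v..1, σ w) - (1 - v) * σ v) := by
        rw [intervalIntegral.integral_of_le (hb n).1]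
        refine setIntegral_congr_fun measurableSet_Ioc fun v hv => ?_
        rw [Real.norm_of_nonneg (by positivity)]
        exact (hEq n hv).symm
    _ = (1 - b n)⁻¹ * (∫ w in b n..1, σ w) - 1 := by
        rw [integral_inv_sq_mul_integral_sub hσ_int hσ_mono (hb n), hσ_one]
    _ ≤ M := by
        linarith [(inv_mul_le_iff₀ (by linarith [(hb n).2])).mpr hσb]

theorem integrable_inv_one_sub (hσ_int : IntervalIntegrable σ volume 0 1)
    (hσ_nonneg : ∀ u ∈ Ico (0:ℝ) 1, 0 ≤ σ u) (hσ_mono : MonotoneOn σ (Ico (0:ℝ) 1))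
    {M : ℝ} (hM : ∀ u ∈ Ico (0:ℝ) 1, σ u ≤ M) (hσ_one : ∫ u in (0:ℝ)..1, σ u = 1)
    (hΓ_supp : Γ (Ico (0:ℝ) 1)ᶜ = 0)
    (hΓ_cdf : ∀ u ∈ Ico (0:ℝ) 1,
      Γ (Icc 0 u) = ENNReal.ofReal ((1 - u) * σ u + ∫ v in (0:ℝ)..u, σ v)) :
    Integrable (fun u => (1 - u)⁻¹) Γ := by
  have hae : ∀ᵐ u ∂Γ, u ∈ Ico (0:ℝ) 1 := mem_ae_iff.mpr hΓ_supp
  have hk := (integrableOn_inv_sq_mul_measureReal_Ioo hσ_int hσ_nonneg hσ_mono hM hσ_one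
    hΓ_supp hΓ_cdf).lintegral_lt_top
  refine ⟨(measurable_const.sub measurable_id).inv.aestronglyMeasurable,
    (hasFiniteIntegral_iff_ofReal (hae.mono fun u hu => ?_)).mpr ?_⟩
  · exact inv_nonneg.mpr (by linarith [hu.2])
  rw [← Measure.restrict_eq_self_of_ae_mem hae, lintegral_inv_one_sub_eq Γ,
    Measure.restrict_congr_set Ico_ae_eq_Ioc]
  refine ENNReal.add_lt_top.mpr
    ⟨measure_lt_top _ _, lt_of_eq_of_lt (lintegral_congr fun v => ?_) hk⟩
  rw [ENNReal.ofReal_mul (by positivity), ofReal_measureReal]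

end SpectralMeasure

theorem stmt_8_general {Ω : Type*} [MeasurableSpace Ω] (π : Measure Ω) [IsProbabilityMeasure π]
    (L : Ω → ℝ) (hL : Integrable L π)
    -- the spectral function σ : bounded, nonnegative, increasing, ∫σ = 1
    (σ : ℝ → ℝ)
    (hσ_nonneg : ∀ u ∈ Set.Ico (0:ℝ) 1, 0 ≤ σ u)
    (hσ_mono : MonotoneOn σ (Set.Ico (0:ℝ) 1))
    (hσ_bdd : ∃ M, ∀ u ∈ Set.Ico (0:ℝ) 1, σ u ≤ M)
    (hσ_one : ∫ u in (0:ℝ)..1, σ u = 1)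
    -- Γ_σ : the probability measure on [0,1) with distribution function (1-u)σ(u) + ∫_0^u σ(v)dv
    (Γ : Measure ℝ) [IsProbabilityMeasure Γ]
    (hΓ_supp : Γ (Set.Ico (0:ℝ) 1)ᶜ = 0)
    (hΓ_cdf : ∀ u ∈ Set.Ico (0:ℝ) 1,
      Γ (Set.Icc 0 u) = ENNReal.ofReal ((1 - u) * σ u + ∫ v in (0:ℝ)..u, σ v))
    -- ES_{u,π}(L) = inf_b (b + (1-u)^{-1} E_π[(L-b)_+]), with ES_{0,π}(L) = E_π[L]
    (ES : ℝ → ℝ)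
    (hES : ∀ u, ES u =
      sInf (Set.range fun b : ℝ => b + (1 - u)⁻¹ * ∫ ω, max (L ω - b) 0 ∂π)) :
    -- interchange of infimum and integral
    -- the infimum restricted to bounded measurable β has the same value
    sInf {r : ℝ | ∃ β : ℝ → ℝ, Measurable β ∧ (∃ M : ℝ, ∀ u, |β u| ≤ M) ∧
        r = ∫ u, (β u + (1 - u)⁻¹ * ∫ ω, max (L ω - β u) 0 ∂π) ∂Γ}
      = (Γ {(0:ℝ)}).toReal * (∫ ω, L ω ∂π) + ∫ u in ({(0:ℝ)}ᶜ), ES u ∂Γ := by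
  obtain ⟨M, hM⟩ := hσ_bdd
  set ν := π.map L
  have : IsProbabilityMeasure ν := Measure.isProbabilityMeasure_map hL.aemeasurable
  have hν : Integrable (fun x => x) ν :=
    (integrable_map_measure aestronglyMeasurable_id hL.aemeasurable).mpr hL
  have hobj : ∀ u b, b + (1 - u)⁻¹ * ∫ ω, max (L ω - b) 0 ∂π = esObjective ν u b := fun u b => by
    rw [esObjective, stopLoss, integral_map hL.aemeasurable (by fun_prop)]
  have hES' : ∀ u, ES u = sInf (range (esObjective ν u)) := fun u => by
    simp only [hES, hobj]
  have hΓ_ae : ∀ᵐ u ∂Γ, u ∈ Ico (0:ℝ) 1 := mem_ae_iff.mpr hΓ_supp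
  have hΓ_inv : Integrable (fun u => (1 - u)⁻¹) Γ :=
    -- `σ` is integrable on `[0, 1]`, since otherwise its integral would be `0`
    integrable_inv_one_sub
      (intervalIntegral.intervalIntegrable_of_integral_ne_zero (by simp [hσ_one]))
      hσ_nonneg hσ_mono hM hσ_one hΓ_supp hΓ_cdf
  have hES_int : Integrable ES Γ := by
    simpa only [← hES'] using integrable_sInf_range_esObjective hν hΓ_ae hΓ_inv
  have hES_zero : ES 0 = ∫ ω, L ω ∂π := by
    rw [hES', sInf_range_esObjective_zero hν, integral_map hL.aemeasurable (by fun_prop)]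
  simp only [hobj]
  rw [sInf_integral_esObjective hν hΓ_ae hΓ_inv]
  simp only [← hES']
  rw [← integral_add_compl (measurableSet_singleton 0) hES_int, integral_singleton, smul_eq_mul,
    measureReal_def, hES_zero]

theorem stmt_8 {Ω : Type*} [MeasurableSpace Ω] (π : Measure Ω) [IsProbabilityMeasure π]
    (L : Ω → ℝ) (hLmeas : Measurable L) (hL : Integrable L π)
    -- the spectral function σ : bounded, nonnegative, increasing, ∫σ = 1
    (σ : ℝ → ℝ)
    (hσ_nonneg : ∀ u ∈ Set.Ico (0:ℝ) 1, 0 ≤ σ u)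
    (hσ_mono : MonotoneOn σ (Set.Ico (0:ℝ) 1))
    (hσ_bdd : ∃ M, ∀ u ∈ Set.Ico (0:ℝ) 1, σ u ≤ M)
    (hσ_one : ∫ u in (0:ℝ)..1, σ u = 1)
    -- Γ_σ : the probability measure on [0,1) with distribution function (1-u)σ(u) + ∫_0^u σ(v)dv
    (Γ : Measure ℝ) [IsProbabilityMeasure Γ]
    (hΓ_supp : Γ (Set.Ico (0:ℝ) 1)ᶜ = 0)
    (hΓ_cdf : ∀ u ∈ Set.Ico (0:ℝ) 1,
      Γ (Set.Icc 0 u) = ENNReal.ofReal ((1 - u) * σ u + ∫ v in (0:ℝ)..u, σ v))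
    -- ES_{u,π}(L) = inf_b (b + (1-u)^{-1} E_π[(L-b)_+]), with ES_{0,π}(L) = E_π[L]
    (ES : ℝ → ℝ)
    (hES : ∀ u, ES u =
      sInf (Set.range fun b : ℝ => b + (1 - u)⁻¹ * ∫ ω, max (L ω - b) 0 ∂π)) :
    -- interchange of infimum and integral
    -- the infimum restricted to bounded measurable β has the same value
    sInf {r : ℝ | ∃ β : ℝ → ℝ, Measurable β ∧ (∃ M : ℝ, ∀ u, |β u| ≤ M) ∧
        r = ∫ u, (β u + (1 - u)⁻¹ * ∫ ω, max (L ω - β u) 0 ∂π) ∂Γ}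
      = (Γ {(0:ℝ)}).toReal * (∫ ω, L ω ∂π) + ∫ u in ({(0:ℝ)}ᶜ), ES u ∂Γ :=
  stmt_8_general π L hL σ hσ_nonneg hσ_mono hσ_bdd hσ_one Γ hΓ_supp hΓ_cdf ES hES
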